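/- Let m ∈ ℝ, Ω ∈ 𝔥_g, and define the operator 𝒴₊ acting on smooth functions F : ℂ^g → ℂ by (𝒴₊F)(u) = i∇_u F(u) − 4πm·Im(u)ᵀ·Im(Ω)⁻¹·F(u). If F satisfies F(u + Ωλ + μ) = e(−2mλᵀu + f(λ,μ))·F(u) for all λ, μ ∈ ℤ^g, then 𝒴₊F satisfies (𝒴₊F)(u + Ωλ + μ) = e(−2mλᵀu + f(λ,μ))·[(𝒴₊F)(u)] , i.e., 𝒴₊F transforms with the same automorphy factor as F. -/

import Mathlib

open Complex Matrix

noncomputable section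

/-- e(x) = exp(2πix) -/
def e (x : ℂ) : ℂ := Complex.exp (2 * Real.pi * Complex.I * x)

/-- Wirtinger derivative ∂/∂u_j of a smooth function on ℂ^g. -/
def wder {g : ℕ} (F : (Fin g → ℂ) → ℂ) (u : Fin g → ℂ) (j : Fin g) : ℂ :=
  (fderiv ℝ F u (Pi.single j 1) - Complex.I * fderiv ℝ F u (Pi.single j Complex.I)) / 2

/-- The operator 𝒴₊ : (𝒴₊F)(u) = i∇_u F(u) − 4πm·Im(u)ᵀIm(Ω)⁻¹·F(u). -/
def calY {g : ℕ} (m : ℝ) (Ω : Matrix (Fin g) (Fin g) ℂ)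
    (F : (Fin g → ℂ) → ℂ) (u : Fin g → ℂ) (j : Fin g) : ℂ :=
  Complex.I * wder F u j
    - ((4 * Real.pi * m *
        Matrix.vecMul (fun i => (u i).im) ((Ω.map Complex.im)⁻¹) j : ℝ) : ℂ) * F u

/-- if F satisfies F(u + Ωλ + μ) = e(−2mλᵀu + f(λ,μ))·F(u) for all
λ, μ ∈ ℤ^g, then 𝒴₊F transforms with the same automorphy factor. -/
theorem calY_same_automorphy {g : ℕ} (m : ℝ) (Ω : Matrix (Fin g) (Fin g) ℂ)
    (hsymm : Ω.IsSymm) (hpos : (Ω.map Complex.im).PosDef)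
    (F : (Fin g → ℂ) → ℂ) (hF : ContDiff ℝ (⊤ : ℕ∞) F)
    (f : (Fin g → ℤ) → (Fin g → ℤ) → ℂ)
    (hfe : ∀ (lam mu : Fin g → ℤ) (u : Fin g → ℂ),
      F (u + Ω.mulVec (fun i => (lam i : ℂ)) + (fun i => (mu i : ℂ)))
        = e (-2 * (m : ℂ) * ((fun i => (lam i : ℂ)) ⬝ᵥ u) + f lam mu) * F u) :
    ∀ (lam mu : Fin g → ℤ) (u : Fin g → ℂ) (j : Fin g),
      calY m Ω F (u + Ω.mulVec (fun i => (lam i : ℂ)) + (fun i => (mu i : ℂ))) j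
        = e (-2 * (m : ℂ) * ((fun i => (lam i : ℂ)) ⬝ᵥ u) + f lam mu) * calY m Ω F u j := by
  intro lam mu u j
  have hFd : ∀ x, HasFDerivAt F (fderiv ℝ F x) x := fun x =>
    ((hF.differentiable (by simp)) x).hasFDerivAt
  set lc : Fin g → ℂ := fun i => (lam i : ℂ) with hlc
  set mc : Fin g → ℂ := fun i => (mu i : ℂ) with hmc
  set T : Fin g → ℂ := Ω.mulVec lc + mc with hT
  set E : (Fin g → ℂ) → ℂ := fun x => e (-2 * (m : ℂ) * (lc ⬝ᵥ x) + f lam mu) with hEdef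
  set c0 : ℂ := 2 * Real.pi * Complex.I * (-2 * m) with hc0
  set D : (Fin g → ℂ) →L[ℝ] ℂ :=
    ∑ i, lc i • (ContinuousLinearMap.proj i : (Fin g → ℂ) →L[ℝ] ℂ) with hD
  have hDapp : ∀ v : Fin g → ℂ, D v = lc ⬝ᵥ v := by
    intro v
    simp [hD, dotProduct, ContinuousLinearMap.sum_apply]
  have hDdiff : ∀ x : Fin g → ℂ, HasFDerivAt (fun x : Fin g → ℂ => lc ⬝ᵥ x) D x := by
    intro x
    have h : (fun x : Fin g → ℂ => lc ⬝ᵥ x) = fun x => ∑ i, lc i * x i := by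
      funext x; simp [dotProduct]
    rw [h, hD]
    refine HasFDerivAt.fun_sum fun i _ => ?_
    exact ((ContinuousLinearMap.proj i : (Fin g → ℂ) →L[ℝ] ℂ).hasFDerivAt (x := x)).const_mul (lc i)
  -- derivative of E
  have hEder : ∀ x : Fin g → ℂ, HasFDerivAt E ((E x * c0) • D) x := by
    intro x
    have h1 : HasFDerivAt (fun x : Fin g → ℂ =>
        2 * Real.pi * Complex.I * (-2 * (m : ℂ) * (lc ⬝ᵥ x) + f lam mu)) (c0 • D) x := by
      have h2 : HasFDerivAt (fun x : Fin g → ℂ =>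
          -2 * (m : ℂ) * (lc ⬝ᵥ x) + f lam mu) ((-2 * (m : ℂ)) • D) x :=
        ((hDdiff x).const_mul (-2 * (m : ℂ))).add_const (f lam mu)
      have h3 := h2.const_mul (2 * Real.pi * Complex.I)
      refine h3.congr_fderiv ?_
      rw [hc0, smul_smul]
    have h4 := h1.cexp
    rw [smul_smul] at h4
    exact h4
  -- key derivative identity
  have key : ∀ v, fderiv ℝ F (u + T) v
      = E u * c0 * (lc ⬝ᵥ v) * F u + E u * fderiv ℝ F u v := by
    have hfun : (fun x => F (x + T)) = fun x => E x * F x := by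
      funext x
      rw [hT, ← add_assoc]
      exact hfe lam mu x
    have htrans : HasFDerivAt (fun x => F (x + T))
        ((fderiv ℝ F (u + T)).comp (ContinuousLinearMap.id ℝ (Fin g → ℂ))) u := by
      have hin : HasFDerivAt (fun x : Fin g → ℂ => x + T)
          (ContinuousLinearMap.id ℝ (Fin g → ℂ)) u := (hasFDerivAt_id u).add_const T
      exact (hFd (u + T)).comp u hin
    have hprod : HasFDerivAt (fun x => E x * F x)
        (E u • fderiv ℝ F u + F u • ((E u * c0) • D)) u := (hEder u).mul (hFd u)
    rw [hfun] at htrans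
    have heq := htrans.unique hprod
    intro v
    have := congrArg (fun (L : (Fin g → ℂ) →L[ℝ] ℂ) => L v) heq
    simp only [ContinuousLinearMap.comp_apply, ContinuousLinearMap.id_apply,
      ContinuousLinearMap.add_apply, ContinuousLinearMap.smul_apply, hDapp, smul_eq_mul] at this
    rw [this]; ring
  -- imaginary part identity
  have hvec : Matrix.vecMul (fun i => ((u + T) i).im) ((Ω.map Complex.im)⁻¹) j
      = Matrix.vecMul (fun i => (u i).im) ((Ω.map Complex.im)⁻¹) j + (lam j : ℝ) := by
    have him : (fun i => ((u + T) i).im)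
        = (fun i => (u i).im) + (Ω.map Complex.im).mulVec (fun i => (lam i : ℝ)) := by
      funext i
      simp only [hT, Pi.add_apply, Complex.add_im, Matrix.mulVec, Matrix.map_apply,
        dotProduct, hmc, Complex.intCast_im, add_zero]
      congr 1
      rw [Complex.im_sum]
      refine Finset.sum_congr rfl fun k _ => ?_
      simp [hlc, Complex.mul_im]
    have hsy : (Ω.map Complex.im)ᵀ = Ω.map Complex.im := hsymm.map Complex.im
    have hinv : (Ω.map Complex.im) * (Ω.map Complex.im)⁻¹ = 1 :=
      Matrix.mul_nonsing_inv _ hpos.det_pos.ne'.isUnit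
    rw [him, Matrix.add_vecMul, Matrix.vecMul_mulVec, hsy, hinv, Matrix.vecMul_one]
    simp
  -- assemble
  have hFval : F (u + T) = E u * F u := by
    rw [hT, ← add_assoc]; exact hfe lam mu u
  have hwder : wder F (u + T) j = E u * wder F u j + E u * c0 * lc j * F u := by
    rw [wder, wder, key, key]
    rw [dotProduct_single, dotProduct_single]
    have hI : Complex.I * Complex.I = -1 := Complex.I_mul_I
    linear_combination (-(E u * c0 * lc j * F u) / 2) * hI
  rw [add_assoc]
  show calY m Ω F (u + T) j = E u * calY m Ω F u j
  rw [calY, calY, hwder, hFval, hvec]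
  have hI : Complex.I * Complex.I = -1 := Complex.I_mul_I
  push_cast
  rw [hc0]
  linear_combination (-(4 * (Real.pi : ℂ) * m * (lam j : ℂ) * E u * F u)) * hI
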